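/- For every natural number n, a(b(n)) − b(a(n)) = 4·t(n) − 2; in particular this difference takes only the values ±2. -/
import Mathlib

/-- Sum of base-`d` digits of `n`. -/
def sdig (d n : ℕ) : ℕ := (Nat.digits d n).sum

/-- `t_d(n)`: base-`d` digit sum of `n`, reduced mod `d`. -/
def td (d n : ℕ) : ℕ := sdig d n % d

/-- `a_{j,d}(n)`: n-th natural (0-indexed, increasing) with base-`d` digit sum ≡ j mod d. -/
noncomputable def agen (d j n : ℕ) : ℕ := Nat.nth (fun k => sdig d k % d = j) n

/-- n-th odious number (binary digit sum odd), 0-indexed increasing. -/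
noncomputable def odious (n : ℕ) : ℕ := Nat.nth (fun k => (Nat.digits 2 k).sum % 2 = 1) n

/-- n-th evil number (binary digit sum even), 0-indexed increasing. -/
noncomputable def evil (n : ℕ) : ℕ := Nat.nth (fun k => (Nat.digits 2 k).sum % 2 = 0) n

/-- Thue–Morse sequence: parity of the binary digit sum. -/
def tm (n : ℕ) : ℕ := (Nat.digits 2 n).sum % 2

lemma tm_two_mul (n : ℕ) : tm (2 * n) = tm n := by
  rcases Nat.eq_zero_or_pos n with h | h
  · simp [h, tm]
  · unfold tm
    rw [Nat.digits_def' (by norm_num : 1 < 2) (by omega),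
        Nat.mul_mod_right, Nat.mul_div_cancel_left _ (by norm_num : 0 < 2)]
    simp

lemma tm_two_mul_add_one (n : ℕ) : tm (2 * n + 1) = (tm n + 1) % 2 := by
  unfold tm
  rw [Nat.digits_def' (by norm_num : 1 < 2) (by omega)]
  have h1 : (2 * n + 1) % 2 = 1 := by omega
  have h2 : (2 * n + 1) / 2 = n := by omega
  rw [h1, h2, List.sum_cons]
  omega

lemma countE (n : ℕ) : Nat.count (fun k => (Nat.digits 2 k).sum % 2 = 0) (2 * n) = n := by
  induction n with
  | zero => simp
  | succ m ih =>
    have h2 : 2 * (m + 1) = (2 * m + 1) + 1 := by ring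
    rw [h2, Nat.count_succ, Nat.count_succ, ih]
    have h0 := tm_two_mul m
    have h1 := tm_two_mul_add_one m
    unfold tm at h0 h1
    rcases Nat.mod_two_eq_zero_or_one (Nat.digits 2 m).sum with h | h <;>
      simp only [h0, h1, h] <;> norm_num

lemma countO (n : ℕ) : Nat.count (fun k => (Nat.digits 2 k).sum % 2 = 1) (2 * n) = n := by
  induction n with
  | zero => simp
  | succ m ih =>
    have h2 : 2 * (m + 1) = (2 * m + 1) + 1 := by ring
    rw [h2, Nat.count_succ, Nat.count_succ, ih]
    have h0 := tm_two_mul m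
    have h1 := tm_two_mul_add_one m
    unfold tm at h0 h1
    rcases Nat.mod_two_eq_zero_or_one (Nat.digits 2 m).sum with h | h <;>
      simp only [h0, h1, h] <;> norm_num

lemma evil_eq (n : ℕ) : evil n = 2 * n + tm n := by
  have hmem : (Nat.digits 2 (2 * n + tm n)).sum % 2 = 0 := by
    rcases Nat.mod_two_eq_zero_or_one (Nat.digits 2 n).sum with h | h
    · have := tm_two_mul n
      unfold tm at this ⊢
      simp [h] at this ⊢
      omega
    · have := tm_two_mul_add_one n
      unfold tm at this ⊢
      simp [h] at this ⊢
      omega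
  have hcount : Nat.count (fun k => (Nat.digits 2 k).sum % 2 = 0) (2 * n + tm n) = n := by
    rcases Nat.mod_two_eq_zero_or_one (Nat.digits 2 n).sum with h | h
    · have : tm n = 0 := by unfold tm; omega
      rw [this]; simpa using countE n
    · have ht : tm n = 1 := by unfold tm; omega
      rw [ht, Nat.count_succ, countE n]
      have h0 := tm_two_mul n
      unfold tm at h0
      simp [h0, h]
  have := Nat.nth_count (p := fun k => (Nat.digits 2 k).sum % 2 = 0) hmem
  rw [hcount] at this
  exact this

lemma odious_eq (n : ℕ) : odious n = 2 * n + (1 - tm n) := by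
  have hmem : (Nat.digits 2 (2 * n + (1 - tm n))).sum % 2 = 1 := by
    rcases Nat.mod_two_eq_zero_or_one (Nat.digits 2 n).sum with h | h
    · have ht : tm n = 0 := by unfold tm; omega
      rw [ht]
      have := tm_two_mul_add_one n
      unfold tm at this
      simp [h] at this
      simpa using this
    · have ht : tm n = 1 := by unfold tm; omega
      rw [ht]
      have := tm_two_mul n
      unfold tm at this
      simp [h] at this
      simpa using this
  have hcount : Nat.count (fun k => (Nat.digits 2 k).sum % 2 = 1) (2 * n + (1 - tm n)) = n := by
    rcases Nat.mod_two_eq_zero_or_one (Nat.digits 2 n).sum with h | h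
    · have ht : tm n = 0 := by unfold tm; omega
      rw [ht, Nat.count_succ, countO n]
      have h0 := tm_two_mul n
      unfold tm at h0
      simp [h0, h]
    · have ht : tm n = 1 := by unfold tm; omega
      rw [ht]; simpa using countO n
  have := Nat.nth_count (p := fun k => (Nat.digits 2 k).sum % 2 = 1) hmem
  rw [hcount] at this
  exact this

theorem stmt16 (n : ℕ) :
    (odious (evil n) : ℤ) - evil (odious n) = 4 * tm n - 2 := by
  have htm : tm n = 0 ∨ tm n = 1 := by unfold tm; omega
  rcases htm with h | h
  · have he : evil n = 2 * n := by rw [evil_eq, h]; omega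
    have ho : odious n = 2 * n + 1 := by rw [odious_eq, h]
    rw [he, ho, odious_eq, evil_eq, tm_two_mul, tm_two_mul_add_one, h]
    push_cast
    ring
  · have he : evil n = 2 * n + 1 := by rw [evil_eq, h]
    have ho : odious n = 2 * n := by rw [odious_eq, h]; omega
    rw [he, ho, odious_eq, evil_eq, tm_two_mul, tm_two_mul_add_one, h]
    push_cast
    ring
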